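/- For every x ∈ ℝ^K, y, c ∈ ℝ, γ ≠ 0, v ∈ ℝ, and d ∈ {0, 1}, the (K+1)×(K+1) Tobit Hessian matrix H = −(1 − d)·[[x xᵀ, −y·x], [−y·xᵀ, γ⁻² + y²]] − d·λ(−v)(λ(−v) + v)·[[x xᵀ, −c·x], [−c·xᵀ, c²]] is negative semidefinite, i.e. zᵀ H z ≤ 0 for every z ∈ ℝ^{K+1}. -/

import Mathlib

open MeasureTheory ProbabilityTheory Real Filter Set

noncomputable section

/-- The standard normal density `φ`. -/
def gPDF (t : ℝ) : ℝ := (Real.sqrt (2 * Real.pi))⁻¹ * Real.exp (-t ^ 2 / 2)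

/-- The standard normal cumulative distribution function `Φ`. -/
def gCDF (t : ℝ) : ℝ := ∫ s in Set.Iic t, gPDF s

/-- The inverse Mills ratio `λ(v) = φ(v)/(1 - Φ(v))`. -/
def mills (v : ℝ) : ℝ := gPDF v / (1 - gCDF v)

/-- Euclidean norm of a vector in `ℝ^n`. -/
def vnorm {n : ℕ} (x : Fin n → ℝ) : ℝ := Real.sqrt (∑ i, (x i) ^ 2)

/-- Frobenius (Euclidean) norm of a real matrix. -/
def frob {m n : Type*} [Fintype m] [Fintype n] (M : Matrix m n ℝ) : ℝ :=
  Real.sqrt (∑ i, ∑ j, (M i j) ^ 2)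

/-- Dot product `xᵀδ`. -/
def dotp {n : ℕ} (x δ : Fin n → ℝ) : ℝ := ∑ i, x i * δ i

/-- The block matrix `[[x xᵀ, -y·x], [-y·xᵀ, γ⁻² + y²]]`. -/
def blockA (K : ℕ) (x : Fin K → ℝ) (y γ : ℝ) :
    Matrix (Fin K ⊕ Unit) (Fin K ⊕ Unit) ℝ :=
  Matrix.fromBlocks (Matrix.vecMulVec x x) (Matrix.of fun i _ => -(y * x i))
    (Matrix.of fun _ j => -(y * x j)) (Matrix.of fun _ _ => γ⁻¹ ^ 2 + y ^ 2)

/-- The block matrix `[[x xᵀ, -c·x], [-c·xᵀ, c²]]`. -/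
def blockB (K : ℕ) (x : Fin K → ℝ) (c : ℝ) :
    Matrix (Fin K ⊕ Unit) (Fin K ⊕ Unit) ℝ :=
  Matrix.fromBlocks (Matrix.vecMulVec x x) (Matrix.of fun i _ => -(c * x i))
    (Matrix.of fun _ j => -(c * x j)) (Matrix.of fun _ _ => c ^ 2)

/-- The Hessian of the reparameterized log conditional likelihood of the truncated
regression model, `H(y, x; δ, γ)` with `v = γc - xᵀδ`. -/
def truncHess (K : ℕ) (c y : ℝ) (x δ : Fin K → ℝ) (γ : ℝ) :
    Matrix (Fin K ⊕ Unit) (Fin K ⊕ Unit) ℝ :=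
  -(blockA K x y γ) +
    (mills (γ * c - dotp x δ) * (mills (γ * c - dotp x δ) - (γ * c - dotp x δ))) • blockB K x c

/-- The Hessian of the reparameterized log conditional likelihood of the Tobit model,
`H(y, x, d; δ, γ)` with `v = γc - xᵀδ`. -/
def tobitHess (K : ℕ) (c y : ℝ) (x : Fin K → ℝ) (d : ℝ) (δ : Fin K → ℝ) (γ : ℝ) :
    Matrix (Fin K ⊕ Unit) (Fin K ⊕ Unit) ℝ :=
  -((1 - d) • blockA K x y γ) -
    (d * mills (-(γ * c - dotp x δ)) * (mills (-(γ * c - dotp x δ)) + (γ * c - dotp x δ))) •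
      blockB K x c

/-- The score of the reparameterized log conditional likelihood of the Tobit model,
`s(y, x, d; δ, γ)` with `v = γc - xᵀδ`. -/
def tobitScore (K : ℕ) (c y : ℝ) (x : Fin K → ℝ) (d : ℝ) (δ : Fin K → ℝ) (γ : ℝ) :
    Fin K ⊕ Unit → ℝ := fun j =>
  (1 - d) *
      Sum.elim (fun i => (γ * y - dotp x δ) * x i) (fun _ => 1 / γ - (γ * y - dotp x δ) * y) j
    + d * mills (-(γ * c - dotp x δ)) * Sum.elim (fun i => -x i) (fun _ => c) j



lemma gPDF_eq (t : ℝ) : gPDF t = (Real.sqrt (2 * Real.pi))⁻¹ * Real.exp (-(2⁻¹ : ℝ) * t ^ 2) := by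
  rw [gPDF]; ring_nf

lemma gPDF_pos (t : ℝ) : 0 < gPDF t := by
  rw [gPDF]
  have h : 0 < Real.sqrt (2 * Real.pi) := Real.sqrt_pos.2 (by positivity)
  positivity

lemma integrable_gPDF : Integrable gPDF := by
  have h := (integrable_exp_neg_mul_sq (by norm_num : (0:ℝ) < 2⁻¹)).const_mul
    (Real.sqrt (2 * Real.pi))⁻¹
  refine h.congr ?_
  filter_upwards with t
  rw [gPDF_eq]

lemma integral_gPDF : ∫ t, gPDF t = 1 := by
  have h : ∫ t : ℝ, (Real.sqrt (2 * Real.pi))⁻¹ * Real.exp (-(2⁻¹ : ℝ) * t ^ 2)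
      = (Real.sqrt (2 * Real.pi))⁻¹ * Real.sqrt (Real.pi / 2⁻¹) := by
    rw [integral_const_mul, integral_gaussian]
  have h2 : Real.pi / 2⁻¹ = 2 * Real.pi := by ring
  have h3 : Real.sqrt (2 * Real.pi) ≠ 0 := ne_of_gt (Real.sqrt_pos.2 (by positivity))
  calc ∫ t, gPDF t = ∫ t : ℝ, (Real.sqrt (2 * Real.pi))⁻¹ * Real.exp (-(2⁻¹ : ℝ) * t ^ 2) := by
        congr 1; funext t; rw [gPDF_eq]
    _ = 1 := by rw [h, h2, inv_mul_cancel₀ h3]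

lemma one_sub_gCDF (t : ℝ) : 1 - gCDF t = ∫ s in Set.Ioi t, gPDF s := by
  have := intervalIntegral.integral_Iic_add_Ioi (b := t) (μ := volume) (f := gPDF)
    integrable_gPDF.integrableOn integrable_gPDF.integrableOn
  rw [integral_gPDF] at this
  rw [gCDF]; linarith

lemma one_sub_gCDF_pos (t : ℝ) : 0 < 1 - gCDF t := by
  rw [one_sub_gCDF]
  rw [setIntegral_pos_iff_support_of_nonneg_ae]
  · have : Function.support gPDF = Set.univ := by
      ext s; simp [Function.support, (gPDF_pos s).ne']
    rw [this, Set.univ_inter, Real.volume_Ioi]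
    simp
  · filter_upwards with s using (gPDF_pos s).le
  · exact integrable_gPDF.integrableOn

lemma integral_mul_gPDF_Ioi (w : ℝ) : ∫ t in Set.Ioi w, t * gPDF t = gPDF w := by
  have hderiv : ∀ t ∈ Set.Ici w, HasDerivAt (fun s => -gPDF s) (t * gPDF t) t := by
    intro t _
    have h1 : HasDerivAt (fun s : ℝ => -s ^ 2 / 2) (-t) t := by
      have := ((hasDerivAt_pow 2 t).neg.div_const 2)
      refine this.congr_deriv ?_; norm_num; ring
    have h2 := (h1.exp.const_mul (Real.sqrt (2 * Real.pi))⁻¹).neg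
    refine h2.congr_deriv ?_
    rw [gPDF]; ring
  have hint : IntegrableOn (fun t => t * gPDF t) (Set.Ioi w) := by
    have h := (integrable_mul_exp_neg_mul_sq (by norm_num : (0:ℝ) < 2⁻¹)).const_mul
      (Real.sqrt (2 * Real.pi))⁻¹
    refine (h.congr ?_).integrableOn
    filter_upwards with t
    rw [gPDF_eq]; ring
  have htend : Tendsto (fun t => -gPDF t) atTop (nhds 0) := by
    have h1 : Tendsto (fun t : ℝ => -t ^ 2 / 2) atTop atBot := by
      apply Tendsto.atBot_div_const (by norm_num : (0:ℝ) < 2)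
      exact tendsto_neg_atBot_iff.2 (tendsto_pow_atTop (by norm_num))
    have h2 := (Real.tendsto_exp_atBot.comp h1).const_mul (Real.sqrt (2 * Real.pi))⁻¹
    simp only [mul_zero] at h2
    have := h2.neg
    simpa [gPDF] using this
  have := integral_Ioi_of_hasDerivAt_of_tendsto'
    (f := fun s => -gPDF s) (f' := fun t => t * gPDF t) hderiv hint htend
  rw [this]; ring

lemma mills_nonneg (w : ℝ) : 0 ≤ mills w :=
  div_nonneg (gPDF_pos w).le (one_sub_gCDF_pos w).le

lemma le_mills (w : ℝ) : w ≤ mills w := by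
  rcases le_or_gt w 0 with h | h
  · exact h.trans (mills_nonneg w)
  · rw [mills, le_div_iff₀ (one_sub_gCDF_pos w)]
    rw [one_sub_gCDF]
    have h1 : w * ∫ t in Set.Ioi w, gPDF t = ∫ t in Set.Ioi w, w * gPDF t := by
      rw [integral_const_mul]
    rw [h1, ← integral_mul_gPDF_Ioi w]
    apply setIntegral_mono_on
    · exact (integrable_gPDF.const_mul w).integrableOn
    · have h := (integrable_mul_exp_neg_mul_sq (by norm_num : (0:ℝ) < 2⁻¹)).const_mul
        (Real.sqrt (2 * Real.pi))⁻¹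
      refine (h.congr ?_).integrableOn
      filter_upwards with t
      rw [gPDF_eq]; ring
    · exact measurableSet_Ioi
    · intro t ht
      exact mul_le_mul_of_nonneg_right (le_of_lt ht) (gPDF_pos t).le

lemma quad_vecMulVec {n : Type*} [Fintype n] (u z : n → ℝ) :
    dotProduct z ((Matrix.vecMulVec u u).mulVec z) = (dotProduct u z) ^ 2 := by
  have h : (Matrix.vecMulVec u u).mulVec z = (dotProduct u z) • u := by
    ext j
    simp only [Matrix.vecMulVec, Matrix.mulVec, dotProduct, Matrix.of_apply,
      Pi.smul_apply, smul_eq_mul, Finset.sum_mul]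
    exact Finset.sum_congr rfl fun i _ => by ring
  rw [h, dotProduct_smul, smul_eq_mul, sq]
  congr 1
  simp [dotProduct, mul_comm]

lemma quad_blockA (K : ℕ) (x : Fin K → ℝ) (y γ : ℝ) (z : Fin K ⊕ Unit → ℝ) :
    0 ≤ dotProduct z ((blockA K x y γ).mulVec z) := by
  have hA : blockA K x y γ = Matrix.vecMulVec (Sum.elim x fun _ => -y) (Sum.elim x fun _ => -y)
      + Matrix.vecMulVec (Sum.elim (0 : Fin K → ℝ) fun _ => γ⁻¹)
          (Sum.elim (0 : Fin K → ℝ) fun _ => γ⁻¹) := by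
    ext (i | i) (j | j) <;>
      simp [blockA, Matrix.vecMulVec, Matrix.fromBlocks] <;> ring
  rw [hA, Matrix.add_mulVec, dotProduct_add, quad_vecMulVec, quad_vecMulVec]
  positivity

lemma quad_blockB (K : ℕ) (x : Fin K → ℝ) (c : ℝ) (z : Fin K ⊕ Unit → ℝ) :
    0 ≤ dotProduct z ((blockB K x c).mulVec z) := by
  have hB : blockB K x c = Matrix.vecMulVec (Sum.elim x fun _ => -c) (Sum.elim x fun _ => -c) := by
    ext (i | i) (j | j) <;>
      simp [blockB, Matrix.vecMulVec, Matrix.fromBlocks] <;> ring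
  rw [hB, quad_vecMulVec]
  positivity

/-- The Tobit Hessian matrix is negative semidefinite. -/
theorem tobit_hessian_neg_semidef (K : ℕ) (x : Fin K → ℝ) (y c γ : ℝ) (hγ : γ ≠ 0)
    (v : ℝ) (d : ℝ) (hd : d = 0 ∨ d = 1) (z : Fin K ⊕ Unit → ℝ) :
    dotProduct z
      ((-((1 - d) • blockA K x y γ) -
        (d * mills (-v) * (mills (-v) + v)) • blockB K x c).mulVec z) ≤ 0 := by

  have q1 := quad_blockA K x y γ z
  have q2 := quad_blockB K x c z
  have h1 : 0 ≤ 1 - d := by rcases hd with h | h <;> simp [h]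
  have hdn : 0 ≤ d := by rcases hd with h | h <;> simp [h]
  have hc : 0 ≤ d * mills (-v) * (mills (-v) + v) :=
    mul_nonneg (mul_nonneg hdn (mills_nonneg _)) (by linarith [le_mills (-v)])
  rw [Matrix.sub_mulVec, dotProduct_sub, Matrix.neg_mulVec, dotProduct_neg,
    Matrix.smul_mulVec, dotProduct_smul, Matrix.smul_mulVec,
    dotProduct_smul]
  simp only [smul_eq_mul]
  nlinarith [mul_nonneg h1 q1, mul_nonneg hc q2]
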